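/- arXiv:2205.05350 — 2 statements merged into one kernel-verified Lean document; each statement's English description precedes it below -/
import Mathlib

section
/- If C ⊆ X is a clique, then C' = {x' : x ∈ C} is a clique. -/
open scoped Classical

noncomputable section

/-- Valencies of the Penttila–Williford scheme: `pwN r i` is the valency of class `i+1`. -/
def pwN (r : ℤ) : Fin 4 → ℤ := ![(r-1)*(r^2+1), r*(r-2)*(r^2+1), (r-1)*(r^2+1), 1]

/-- Intersection numbers of the Penttila–Williford scheme:
`pwP r k i j` is `p^{k+1}_{(i+1)(j+1)}` (indices in `Fin 4` stand for classes `1,…,4`). -/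
def pwP (r : ℤ) : Fin 4 → Fin 4 → Fin 4 → ℤ :=
  ![![![r^2,           r^2*(r-2),            r-2,           0],
     ![r^2*(r-2),     r^4-4*r^3+5*r^2-2*r,  r^2*(r-2),     0],
     ![r-2,           r^2*(r-2),            r^2,           1],
     ![0,             0,                    1,             0]],
    ![![r*(r-1),       (r-1)^3,              r*(r-1),       0],
     ![(r-1)^3,       r^4-4*r^3+7*r^2-8*r,  (r-1)^3,       1],
     ![r*(r-1),       (r-1)^3,              r*(r-1),       0],
     ![0,             1,                    0,             0]],
    ![![r-2,           r^2*(r-2),            r^2,           1],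
     ![r^2*(r-2),     r^4-4*r^3+5*r^2-2*r,  r^2*(r-2),     0],
     ![r^2,           r^2*(r-2),            r-2,           0],
     ![1,             0,                    0,             0]],
    ![![0,             0,                    (r-1)*(r^2+1), 0],
     ![0,             r*(r-1)*(r^2+1),      0,             0],
     ![(r-1)*(r^2+1), 0,                    0,             0],
     ![0,             0,                    0,             0]]]

/-- A symmetric 4-class association scheme on the finite vertex set `X` having the
parameters of the Penttila–Williford scheme: `R 0` is the identity relation, the
relations partition `X × X`, class `i+1` has valency `pwN r i`, and the intersection
numbers are given by `pwP`. -/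
structure PWScheme (r : ℕ) (X : Type*) [Fintype X] where
  R : Fin 5 → X → X → Prop
  symm : ∀ (i : Fin 5) (x y : X), R i x y → R i y x
  R0_iff : ∀ x y : X, R 0 x y ↔ x = y
  partition : ∀ x y : X, ∃! i : Fin 5, R i x y
  valency : ∀ (i : Fin 4) (x : X), ({y : X | R i.succ x y}.ncard : ℤ) = pwN r i
  inter : ∀ (k i j : Fin 4) (x y : X), R k.succ x y →
    ({z : X | R i.succ x z ∧ R j.succ y z}.ncard : ℤ) = pwP r k i j

namespace PWScheme

variable {r : ℕ} {X : Type*} [Fintype X]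

/-- `Y` is a `{0,3}`-clique. -/
def IsClique03 (S : PWScheme r X) (Y : Set X) : Prop :=
  ∀ x ∈ Y, ∀ y ∈ Y, S.R 0 x y ∨ S.R 3 x y

/-- A *clique*: a maximal `{0,3}`-clique. -/
def IsClique (S : PWScheme r X) (Y : Set X) : Prop :=
  S.IsClique03 Y ∧ ∀ Z : Set X, S.IsClique03 Z → Y ⊆ Z → Y = Z

/-- `R_i(x) = {y ∈ X : (x,y) ∈ R_i}`. -/
def rel (S : PWScheme r X) (i : Fin 5) (x : X) : Set X := {y : X | S.R i x y}

/-- `C' = {x' : x ∈ C}`, the set of antipodes of the points of `C`. -/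
def antiSet (S : PWScheme r X) (C : Set X) : Set X := {y : X | ∃ x ∈ C, S.R 4 x y}

/-- `Δ_C = {z ∈ X : (z,x) ∈ R2 for all x ∈ C}`. -/
def delta (S : PWScheme r X) (C : Set X) : Set X := {z : X | ∀ x ∈ C, S.R 2 z x}

/-- `T_C = Δ_C ∪ C ∪ C'`. -/
def T (S : PWScheme r X) (C : Set X) : Set X := S.delta C ∪ C ∪ S.antiSet C

/-- `𝒬(x)`: the set of cliques through `x`. -/
def Q (S : PWScheme r X) (x : X) : Set (Set X) := {C : Set X | S.IsClique C ∧ x ∈ C}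

/-- `λ(y)` (for `y ∈ R2(x)`): cliques `D ∈ 𝒬(x)` such that `y` is `3`-related to some
point of `D`. -/
def lam (S : PWScheme r X) (x y : X) : Set (Set X) :=
  {D : Set X | D ∈ S.Q x ∧ ∃ z ∈ D, S.R 3 y z}

/-- `μ(y)` (for `y ∈ R2(x)`): cliques `D ∈ 𝒬(x)` with `D ⊆ R2(y)`. -/
def mu (S : PWScheme r X) (x y : X) : Set (Set X) :=
  {D : Set X | D ∈ S.Q x ∧ ∀ z ∈ D, S.R 2 y z}

/-- Hypothesis 1: for `u, v ∈ R2(x)` with `(u,v) ∈ R3`,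
`|λ(u) ∩ λ(v)| + |R3(x) ∩ R3(u) ∩ R3(v)| = r² - 2r`. -/
def Hyp1 (S : PWScheme r X) : Prop :=
  ∀ x u v : X, u ∈ S.rel 2 x → v ∈ S.rel 2 x → S.R 3 u v →
    ((S.lam x u ∩ S.lam x v).ncard : ℤ) +
      ((S.rel 3 x ∩ S.rel 3 u ∩ S.rel 3 v).ncard : ℤ) = (r : ℤ)^2 - 2*r

/-- Hypothesis 2: for cliques `C1, C2` with `T_{C1} ∩ T_{C2} = ∅`, every point outside
`T_{C1} ∪ T_{C2}` lies on at least one clique disjoint from `T_{C1} ∪ T_{C2}`. -/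
def Hyp2 (S : PWScheme r X) : Prop :=
  ∀ C1 C2 : Set X, S.IsClique C1 → S.IsClique C2 → S.T C1 ∩ S.T C2 = ∅ →
    ∀ x : X, x ∉ S.T C1 ∪ S.T C2 →
      ∃ D : Set X, S.IsClique D ∧ x ∈ D ∧ D ∩ (S.T C1 ∪ S.T C2) = ∅

end PWScheme

/-!
The intersection number `p^4_{31}` equals the valency `k_3`, so every `R3`-neighbour of `x` is an
`R1`-neighbour of its antipode `x'`; likewise `p^4_{13} = k_1` makes every `R1`-neighbour of `y`
an `R3`-neighbour of `y'`. Hence `x ↦ x'` is an involution of `X` preserving `R0 ∪ R3`, and such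
a map sends maximal `{0,3}`-cliques to maximal ones.
-/

namespace PWScheme

variable {r : ℕ} {X : Type*} [Fintype X] (S : PWScheme r X)

lemma R_of_inter_eq_valency {k i j : Fin 4} (h : pwP r k i j = pwN r i) {x y z : X}
    (hxy : S.R k.succ x y) (hxz : S.R i.succ x z) : S.R j.succ y z := by
  have hsub : {w | S.R i.succ x w ∧ S.R j.succ y w} ⊆ {w | S.R i.succ x w} := fun _ hw => hw.1
  have hcard : {w | S.R i.succ x w}.ncard ≤ {w | S.R i.succ x w ∧ S.R j.succ y w}.ncard := by
    have := S.inter k i j x y hxy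
    rw [h, ← S.valency i x] at this
    exact_mod_cast this.ge
  have hz : z ∈ {w | S.R i.succ x w ∧ S.R j.succ y w} := by
    rw [Set.eq_of_subset_of_ncard_le hsub hcard]
    exact hxz
  exact hz.2

lemma ncard_antipodes (x : X) : {y | S.R 4 x y}.ncard = 1 :=
  Nat.cast_eq_one.mp (S.valency 3 x)

lemma exists_antipode (x : X) : ∃ x', S.R 4 x x' := by
  obtain ⟨a, ha⟩ := Set.ncard_eq_one.mp (S.ncard_antipodes x)
  exact ⟨a, ha.ge rfl⟩

lemma antipode_unique {x y z : X} (hy : S.R 4 x y) (hz : S.R 4 x z) : y = z :=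
  (Set.ncard_le_one_iff (Set.toFinite _)).mp (S.ncard_antipodes x).le hy hz

lemma R1_of_antipode_R3 {x x' y : X} (hx : S.R 4 x x') (h : S.R 3 x y) : S.R 1 x' y :=
  S.R_of_inter_eq_valency (k := 3) (i := 2) (j := 0) rfl hx h

lemma R3_of_antipode_R1 {y y' z : X} (hy : S.R 4 y y') (h : S.R 1 y z) : S.R 3 y' z :=
  S.R_of_inter_eq_valency (k := 3) (i := 0) (j := 2) rfl hy h

lemma R3_antipodes {x y x' y' : X} (hx : S.R 4 x x') (hy : S.R 4 y y') (h : S.R 3 x y) :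
    S.R 3 x' y' :=
  S.symm 3 _ _ (S.R3_of_antipode_R1 hy (S.symm 1 _ _ (S.R1_of_antipode_R3 hx h)))

lemma antiSet_mono {C D : Set X} (h : C ⊆ D) : S.antiSet C ⊆ S.antiSet D :=
  fun _ ⟨x, hx, hxy⟩ => ⟨x, h hx, hxy⟩

lemma antiSet_antiSet (C : Set X) : S.antiSet (S.antiSet C) = C := by
  ext z
  constructor
  · rintro ⟨y, ⟨x, hx, hxy⟩, hyz⟩
    rwa [← S.antipode_unique (S.symm 4 _ _ hxy) hyz]
  · intro hz
    obtain ⟨z', hz'⟩ := S.exists_antipode z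
    exact ⟨z', ⟨z, hz, hz'⟩, S.symm 4 _ _ hz'⟩

lemma IsClique03.antiSet {C : Set X} (hC : S.IsClique03 C) : S.IsClique03 (S.antiSet C) := by
  rintro x' ⟨x, hx, hxx'⟩ y' ⟨y, hy, hyy'⟩
  rcases hC x hx y hy with h0 | h3
  · rw [S.R0_iff] at h0 ⊢
    subst h0
    exact Or.inl (S.antipode_unique hxx' hyy')
  · exact Or.inr (S.R3_antipodes hxx' hyy' h3)

end PWScheme

theorem statement_3_general {r : ℕ} {X : Type*} [Fintype X] (S : PWScheme r X)
    (C : Set X) (hC : S.IsClique C) :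
    S.IsClique (S.antiSet C) := by
  refine ⟨PWScheme.IsClique03.antiSet S hC.1, fun Z hZ hCZ => ?_⟩
  have hC_eq : C = S.antiSet Z := by
    refine hC.2 _ (PWScheme.IsClique03.antiSet S hZ) ?_
    simpa only [S.antiSet_antiSet] using S.antiSet_mono hCZ
  rw [hC_eq, S.antiSet_antiSet]

/-- if `C` is a clique then `C' = {x' : x ∈ C}` is a clique. -/
theorem statement_3 {r : ℕ} (hr : 3 ≤ r) {X : Type*} [Fintype X] (S : PWScheme r X)
    (C : Set X) (hC : S.IsClique C) :
    S.IsClique (S.antiSet C) :=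
  statement_3_general S C hC
end
end

section
/- Let Q be a finite set with |Q| = r² + 1, and let U_1, ..., U_r be subsets of Q, each of size r + 1, whose union is Q and such that |U_i ∩ U_j| = 1 for all i ≠ j. Then there is an element common to all the sets U_1, ..., U_r (and this common element is unique). -/
/-!
Count, for each point `q`, the number `D q` of sets containing it. Double counting gives
`∑ D = r (r + 1)`, hence `∑ (D - 1) = r - 1` because every point is covered, and
`∑ D (D - 1) = r (r - 1)` because two sets meet in exactly one point. If every `D q` were at
most `r - 1`, then `∑ D (D - 1) ≤ (r - 1) ∑ (D - 1) = (r - 1)²`, which is too small; so some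
point lies in all `r` sets, and it is unique since two of the sets share only one point.
-/

open Finset

section CoverDegree

variable {ι α : Type*} [Fintype ι] [DecidableEq α] (U : ι → Finset α)

def coverDegree (q : α) : ℕ := #{i | q ∈ U i}

variable {U}

theorem coverDegree_eq_card_iff {q : α} :
    coverDegree U q = Fintype.card ι ↔ ∀ i, q ∈ U i := by
  simp [coverDegree, ← card_univ, card_filter_eq_iff]

theorem sum_coverDegree {Q : Finset α} (hsub : ∀ i, U i ⊆ Q) :
    ∑ q ∈ Q, coverDegree U q = ∑ i, #(U i) := by
  refine (sum_card_bipartiteAbove_eq_sum_card_bipartiteBelow (fun q i => q ∈ U i)).trans ?_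
  refine sum_congr rfl fun i _ => congrArg card ?_
  ext q
  simp only [bipartiteBelow, mem_filter, and_iff_right_iff_imp]
  exact fun hq => hsub i hq

theorem coverDegree_mul_pred (q : α) :
    coverDegree U q * (coverDegree U q - 1) = #{p ∈ univ.offDiag | q ∈ U p.1 ∩ U p.2} := by
  have : ({p ∈ univ.offDiag | q ∈ U p.1 ∩ U p.2} : Finset (ι × ι)) =
      ({i | q ∈ U i} : Finset ι).offDiag := by
    ext p
    simp only [mem_filter, mem_offDiag, mem_univ, mem_inter, true_and]
    tauto
  rw [this, offDiag_card, coverDegree, Nat.mul_sub_one]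

theorem sum_coverDegree_mul_pred {Q : Finset α} (hsub : ∀ i, U i ⊆ Q) :
    ∑ q ∈ Q, coverDegree U q * (coverDegree U q - 1) =
      ∑ p ∈ (univ : Finset ι).offDiag, #(U p.1 ∩ U p.2) := by
  simp_rw [coverDegree_mul_pred]
  refine (sum_card_bipartiteAbove_eq_sum_card_bipartiteBelow
    (fun q (p : ι × ι) => q ∈ U p.1 ∩ U p.2)).trans ?_
  refine sum_congr rfl fun p _ => congrArg card ?_
  ext q
  simp only [bipartiteBelow, mem_filter, and_iff_right_iff_imp]
  exact fun hq => hsub p.1 (mem_inter.1 hq).1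

end CoverDegree

theorem exists_eq_of_mul_sum_pred_lt_sum_mul_pred {β : Type*} {s : Finset β} {d : β → ℕ}
    {m : ℕ} (hle : ∀ q ∈ s, d q ≤ m)
    (hlt : (m - 1) * ∑ q ∈ s, (d q - 1) < ∑ q ∈ s, d q * (d q - 1)) :
    ∃ q ∈ s, d q = m := by
  by_contra! hne
  refine hlt.not_ge ?_
  rw [mul_sum]
  refine sum_le_sum fun q hq => Nat.mul_le_mul_right _ ?_
  have := hle q hq
  have := hne q hq
  omega

/-- let `r ≥ 2`, let `Q` be a finite set with `|Q| = r² + 1`, and let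
`U_1, …, U_r` be subsets of `Q`, each of size `r + 1`, covering `Q`, with
`|U_i ∩ U_j| = 1` for `i ≠ j`. Then all the sets `U_i` have a (unique) common
element. -/
theorem statement_9 {r : ℕ} (hr : 2 ≤ r) {α : Type*} [DecidableEq α]
    (Q : Finset α) (hQ : Q.card = r^2 + 1)
    (U : Fin r → Finset α) (hsub : ∀ i, U i ⊆ Q) (hcard : ∀ i, (U i).card = r + 1)
    (hcover : ∀ q ∈ Q, ∃ i, q ∈ U i)
    (hint : ∀ i j, i ≠ j → (U i ∩ U j).card = 1) :
    ∃! q : α, ∀ i, q ∈ U i := by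
  set D : α → ℕ := coverDegree U
  have hD_pos : ∀ q ∈ Q, 1 ≤ D q := fun q hq =>
    card_pos.2 <| (hcover q hq).imp fun i hi => by simpa using hi
  have hD_le : ∀ q ∈ Q, D q ≤ r := fun q _ => (card_filter_le _ _).trans_eq (card_fin r)
  have hsum : ∑ q ∈ Q, D q = r ^ 2 + r := by
    simp only [D, sum_coverDegree hsub, hcard, sum_const, card_univ, Fintype.card_fin, smul_eq_mul]
    ring
  have hexcess : ∑ q ∈ Q, (D q - 1) = r - 1 := by
    rw [sum_tsub_distrib Q hD_pos, hsum, sum_const, hQ, smul_eq_mul, mul_one]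
    omega
  have hpairs : ∑ q ∈ Q, D q * (D q - 1) = r * (r - 1) := by
    rw [sum_coverDegree_mul_pred hsub,
      sum_congr rfl fun p hp => hint p.1 p.2 (mem_offDiag.1 hp).2.2]
    simp [offDiag_card, Nat.mul_sub_one]
  obtain ⟨q, -, hq⟩ := exists_eq_of_mul_sum_pred_lt_sum_mul_pred hD_le <| by
    rw [hexcess, hpairs]
    exact Nat.mul_lt_mul_of_pos_right (by omega) (by omega)
  have hall : ∀ i, q ∈ U i := coverDegree_eq_card_iff.1 (hq.trans (Fintype.card_fin r).symm)
  refine ⟨q, hall, fun q' hq' => ?_⟩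
  have h01 : (⟨0, by omega⟩ : Fin r) ≠ ⟨1, by omega⟩ := by simp
  exact card_le_one.1 (hint _ _ h01).le q' (mem_inter.2 ⟨hq' _, hq' _⟩) q
    (mem_inter.2 ⟨hall _, hall _⟩)
end
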